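/- arXiv:2407.15760 — 10 statements merged into one kernel-verified Lean document; each statement's English description precedes it below -/
import Mathlib

section
/- The effective road Hamiltonian H_r is strictly convex on ℝ and coercive, i.e., H_r(q)/|q| → +∞ as |q| → ∞. -/
open Real Filter Set

noncomputable section

/-- The field Lagrangian `L_f(v₁,v₂) = (v₁² + v₂²)/4 − 1`. -/
def Lf (v₁ v₂ : ℝ) : ℝ := (v₁ ^ 2 + v₂ ^ 2) / 4 - 1

/-- The effective road Hamiltonian `H_r(q) = q² + (p_q)² + 1` built from the
critical-slope function `pq`. -/
def Hr (pq : ℝ → ℝ) (q : ℝ) : ℝ := q ^ 2 + pq q ^ 2 + 1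

/-- The road Lagrangian: the Legendre transform of `Hr`. -/
def Lr (pq : ℝ → ℝ) (v : ℝ) : ℝ := ⨆ q : ℝ, (v * q - Hr pq q)

/-- `pq` assigns to each `q` the critical slope `p_q`: it equals `0` when
`(D−1)q² ≤ 1`, and otherwise it is the unique positive root of
`(D−1)q² = p² + 1 + μp/(κν + p)`. -/
def IsCriticalSlope (D μ ν κ : ℝ) (pq : ℝ → ℝ) : Prop :=
  ∀ q : ℝ,
    ((D - 1) * q ^ 2 ≤ 1 → pq q = 0) ∧
    (1 < (D - 1) * q ^ 2 →
      0 < pq q ∧ (D - 1) * q ^ 2 = pq q ^ 2 + 1 + μ * pq q / (κ * ν + pq q))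

/-- The set of candidate costs in the control problem at a point `(x,y)` with
`x ≥ 0`, `y ≥ 0`: the pure-field cost, the broken road-then-field costs, and
(when `y = 0`) the pure-road cost. -/
def Jset (pq : ℝ → ℝ) (x y : ℝ) : Set ℝ :=
  {Lf x y} ∪
    {c | ∃ τ z : ℝ, 0 < τ ∧ τ < 1 ∧ 0 ≤ z ∧ z ≤ x ∧
      c = (1 - τ) * Lf ((x - z) / (1 - τ)) (y / (1 - τ)) + τ * Lr pq (z / τ)} ∪
    (if y = 0 then {Lr pq x} else ∅)

/-- The value function `J(x,y)`, extended evenly in `x`. -/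
def J (pq : ℝ → ℝ) (x y : ℝ) : ℝ := sInf (Jset pq |x| y)
/-- The field Hamiltonian `H_f(q,p) = q² + p² + 1`. -/
def Hf (q p : ℝ) : ℝ := q ^ 2 + p ^ 2 + 1

/-- The road boundary Hamiltonian `F₀(q,p) = Dq² − μp/(κν + p)`. -/
def F0 (D μ ν κ q p : ℝ) : ℝ := D * q ^ 2 - μ * p / (κ * ν + p)

/-- The spreading speed along the road, `inf_{q>0} H_r(q)/q`. -/
def roadSpeed (pq : ℝ → ℝ) : ℝ := sInf ((fun q => Hr pq q / q) '' Set.Ioi (0 : ℝ))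

/-- The directional spreading speed in direction `ϑ` (measured from the
positive `y`-axis). -/
def cstar (pq : ℝ → ℝ) (ϑ : ℝ) : ℝ :=
  sSup {r : ℝ | 0 ≤ r ∧ J pq (r * Real.sin ϑ) (r * Real.cos ϑ) ≤ 0}

/-- Reflection across the line through the origin in direction `(cos a, sin a)`. -/
def Psi (a : ℝ) (p : ℝ × ℝ) : ℝ × ℝ :=
  (p.1 * Real.cos (2 * a) + p.2 * Real.sin (2 * a),
   p.1 * Real.sin (2 * a) - p.2 * Real.cos (2 * a))

/-- The closed cone of opening angle `2a` between the positive `x`-axis and the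
ray at angle `π/2 − 2a` from the positive `y`-axis. -/
def coneA (a : ℝ) : Set (ℝ × ℝ) :=
  {p | ∃ r ϑ : ℝ, 0 ≤ r ∧ π / 2 - 2 * a ≤ ϑ ∧ ϑ ≤ π / 2 ∧
    p = (r * Real.sin ϑ, r * Real.cos ϑ)}

/-!
The critical-slope equation says `φ (p_q²) = max ((D - 1) q²) 1`, where
`φ u = u + 1 + μ√u/(κν + √u)` is concave and strictly increasing on `[0, ∞)`. Inverting a concave
increasing function preserves the convexity of the right-hand side, so `q ↦ p_q²` is convex, and
`H_r = q² + p_q² + 1` is strictly convex. Coercivity is `H_r(q) ≥ q²`.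
-/

section ConvexInverse

variable {𝕜 E β γ : Type*} [Semiring 𝕜] [PartialOrder 𝕜]
  [AddCommMonoid E] [Module 𝕜 E]
  [AddCommMonoid β] [LinearOrder β] [Module 𝕜 β]
  [AddCommMonoid γ] [PartialOrder γ] [Module 𝕜 γ]
  {s : Set E} {t : Set β} {f : E → β} {φ : β → γ}

theorem ConvexOn.of_concaveOn_comp (h : ConvexOn 𝕜 s (φ ∘ f)) (hφ : ConcaveOn 𝕜 t φ)
    (hφm : StrictMonoOn φ t) (hf : MapsTo f s t) : ConvexOn 𝕜 s f := by
  refine ⟨h.1, fun x hx y hy a b ha hb hab => ?_⟩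
  have hxy := h.1 hx hy ha hb hab
  refine (hφm.le_iff_le (hf hxy) (hφ.1 (hf hx) (hf hy) ha hb hab)).1 ?_
  exact (h.2 hx hy ha hb hab).trans (hφ.2 (hf hx) (hf hy) ha hb hab)

end ConvexInverse

theorem concaveOn_div_const_add {c : ℝ} (hc : 0 < c) :
    ConcaveOn ℝ (Ici 0) fun x : ℝ => x / (c + x) := by
  refine ⟨convex_Ici 0, fun x (hx : 0 ≤ x) y (hy : 0 ≤ y) a b ha hb hab => ?_⟩
  simp only [smul_eq_mul]
  obtain rfl : b = 1 - a := by linarith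
  rw [← mul_div_assoc, ← mul_div_assoc, div_add_div _ _ (by positivity) (by positivity),
    div_le_div_iff₀ (by positivity) (by positivity)]
  nlinarith [mul_nonneg (mul_nonneg (mul_nonneg hc.le ha) hb) (sq_nonneg (x - y))]

theorem monotoneOn_div_const_add {c : ℝ} (hc : 0 < c) :
    MonotoneOn (fun x : ℝ => x / (c + x)) (Ici 0) := by
  intro x (hx : 0 ≤ x) y (hy : 0 ≤ y) hxy
  dsimp only
  rw [div_le_div_iff₀ (by positivity) (by positivity)]
  nlinarith

/-- The right-hand side `p² + 1 + μp/(c + p)` of the critical-slope equation, as a function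
of `u = p²`. -/
def slopeEquationRhs (μ c u : ℝ) : ℝ := u + 1 + μ * (√u / (c + √u))

theorem concaveOn_slopeEquationRhs {μ c : ℝ} (hμ : 0 ≤ μ) (hc : 0 < c) :
    ConcaveOn ℝ (Ici 0) (slopeEquationRhs μ c) := by
  have himage : Real.sqrt '' Ici 0 = Ici 0 := by
    ext y
    exact ⟨by rintro ⟨u, -, rfl⟩; exact Real.sqrt_nonneg u,
      fun hy => ⟨y ^ 2, sq_nonneg y, Real.sqrt_sq hy⟩⟩
  have hcomp : ConcaveOn ℝ (Ici 0) fun u => √u / (c + √u) := by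
    refine ConcaveOn.comp (g := fun x => x / (c + x)) ?_ strictConcaveOn_sqrt.concaveOn ?_ <;>
      rw [himage]
    exacts [concaveOn_div_const_add hc, monotoneOn_div_const_add hc]
  exact ((concaveOn_id (convex_Ici 0)).add_const 1).add (hcomp.smul hμ)

theorem strictMonoOn_slopeEquationRhs {μ c : ℝ} (hμ : 0 ≤ μ) (hc : 0 < c) :
    StrictMonoOn (slopeEquationRhs μ c) (Ici 0) := by
  have hsqrt : MonotoneOn (fun u => μ * (√u / (c + √u))) (Ici 0) :=
    fun u _ v _ huv => mul_le_mul_of_nonneg_left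
      (monotoneOn_div_const_add hc (Real.sqrt_nonneg u) (Real.sqrt_nonneg v)
        (Real.sqrt_le_sqrt huv)) hμ
  exact (strictMono_id.add_const 1).strictMonoOn _ |>.add_monotone hsqrt

namespace IsCriticalSlope

variable {D μ ν κ : ℝ} {pq : ℝ → ℝ}

theorem nonneg (hpq : IsCriticalSlope D μ ν κ pq) (q : ℝ) : 0 ≤ pq q := by
  rcases le_or_gt ((D - 1) * q ^ 2) 1 with h | h
  · exact ((hpq q).1 h).ge
  · exact ((hpq q).2 h).1.le

theorem slopeEquationRhs_sq (hpq : IsCriticalSlope D μ ν κ pq) (q : ℝ) :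
    slopeEquationRhs μ (κ * ν) (pq q ^ 2) = max ((D - 1) * q ^ 2) 1 := by
  rw [slopeEquationRhs, Real.sqrt_sq (hpq.nonneg q), ← mul_div_assoc]
  rcases le_or_gt ((D - 1) * q ^ 2) 1 with h | h
  · simp [(hpq q).1 h, h]
  · rw [max_eq_left h.le, ((hpq q).2 h).2]

theorem convexOn_sq (hpq : IsCriticalSlope D μ ν κ pq) (hD : 1 ≤ D) (hμ : 0 ≤ μ)
    (hκν : 0 < κ * ν) : ConvexOn ℝ univ fun q => pq q ^ 2 := by
  have hmax : ConvexOn ℝ univ fun q : ℝ => max ((D - 1) * q ^ 2) 1 :=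
    ((Even.convexOn_pow even_two).smul (sub_nonneg.2 hD)).sup (convexOn_const 1 convex_univ)
  refine ConvexOn.of_concaveOn_comp ?_ (concaveOn_slopeEquationRhs hμ hκν)
    (strictMonoOn_slopeEquationRhs hμ hκν) fun q _ => sq_nonneg (pq q)
  simpa only [Function.comp_def, hpq.slopeEquationRhs_sq] using hmax

end IsCriticalSlope

theorem strictConvexOn_Hr {pq : ℝ → ℝ} (h : ConvexOn ℝ univ fun q => pq q ^ 2) :
    StrictConvexOn ℝ univ (Hr pq) :=
  ((Even.strictConvexOn_pow even_two two_ne_zero).add_convexOn h).add_const 1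

theorem abs_le_Hr_div_abs (pq : ℝ → ℝ) (q : ℝ) : |q| ≤ Hr pq q / |q| := by
  calc |q| = q ^ 2 / |q| := by rw [← sq_abs, sq, mul_self_div_self]
    _ ≤ Hr pq q / |q| := by
      gcongr
      unfold Hr
      linarith [sq_nonneg (pq q)]

theorem tendsto_Hr_div_abs_cocompact (pq : ℝ → ℝ) :
    Tendsto (fun q : ℝ => Hr pq q / |q|) (cocompact ℝ) atTop :=
  tendsto_atTop_mono (abs_le_Hr_div_abs pq) tendsto_norm_cocompact_atTop

/-- The effective road Hamiltonian `H_r` is strictly convex on `ℝ` and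
coercive: `H_r(q)/|q| → +∞` as `|q| → ∞`. -/
theorem Hr_strictConvex_and_coercive
    (D μ ν κ : ℝ) (hD : 1 < D) (hμ : 0 < μ) (hν : 0 < ν) (hκ : 0 < κ)
    (pq : ℝ → ℝ) (hpq : IsCriticalSlope D μ ν κ pq) :
    StrictConvexOn ℝ Set.univ (Hr pq) ∧
      Tendsto (fun q : ℝ => Hr pq q / |q|) (cocompact ℝ) atTop :=
  ⟨strictConvexOn_Hr (hpq.convexOn_sq hD.le hμ.le (mul_pos hκ hν)),
    tendsto_Hr_div_abs_cocompact pq⟩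
end
end

section
/- For every q ∈ ℝ, the following are equivalent: (a) H_f(q,0) < F_0(q,0); (b) (D−1)q² > 1; (c) there exists a unique p > 0 such that H_f(q,p) = F_0(q,p). Moreover, whenever these equivalent conditions hold, the unique p in (c) equals p_q, and H_r(q) = H_f(q, p_q) = F_0(q, p_q). -/
open Real Filter Set

noncomputable section

lemma key_iff (D μ ν κ : ℝ) (q p : ℝ) (hp : 0 < p) (hν : 0 < ν) (hκ : 0 < κ) :
    Hf q p = F0 D μ ν κ q p ↔ (D - 1) * q ^ 2 = p ^ 2 + 1 + μ * p / (κ * ν + p) := by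
  unfold Hf F0
  have h : (0:ℝ) < κ * ν + p := add_pos (mul_pos hκ hν) hp
  constructor <;> intro he <;> field_simp at he ⊢ <;> nlinarith [he]

lemma g_mono (μ ν κ : ℝ) (hμ : 0 < μ) (hν : 0 < ν) (hκ : 0 < κ)
    {p₁ p₂ : ℝ} (h1 : 0 < p₁) (h2 : p₁ < p₂) :
    p₁ ^ 2 + 1 + μ * p₁ / (κ * ν + p₁) < p₂ ^ 2 + 1 + μ * p₂ / (κ * ν + p₂) := by
  have ha : (0:ℝ) < κ * ν + p₁ := add_pos (mul_pos hκ hν) h1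
  have hb : (0:ℝ) < κ * ν + p₂ := add_pos (mul_pos hκ hν) (h1.trans h2)
  have hd : μ * p₁ / (κ * ν + p₁) ≤ μ * p₂ / (κ * ν + p₂) := by
    rw [div_le_div_iff₀ ha hb]
    nlinarith [mul_pos hμ (mul_pos (mul_pos hκ hν) (sub_pos.mpr h2))]
  nlinarith

/-- Equivalence of: (a) `H_f(q,0) < F₀(q,0)`; (b) `(D−1)q² > 1`;
(c) existence of a unique `p > 0` with `H_f(q,p) = F₀(q,p)`.  Moreover, when
these hold, the unique intersection point is `p_q` and
`H_r(q) = H_f(q,p_q) = F₀(q,p_q)`. -/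
theorem Hf_F0_equivalences
    (D μ ν κ : ℝ) (hD : 1 < D) (hμ : 0 < μ) (hν : 0 < ν) (hκ : 0 < κ)
    (pq : ℝ → ℝ) (hpq : IsCriticalSlope D μ ν κ pq) (q : ℝ) :
    ((Hf q 0 < F0 D μ ν κ q 0) ↔ 1 < (D - 1) * q ^ 2) ∧
    ((Hf q 0 < F0 D μ ν κ q 0) ↔
      ∃! p : ℝ, 0 < p ∧ Hf q p = F0 D μ ν κ q p) ∧
    (Hf q 0 < F0 D μ ν κ q 0 →
      (∀ p : ℝ, 0 < p → Hf q p = F0 D μ ν κ q p → p = pq q) ∧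
      Hr pq q = Hf q (pq q) ∧ Hr pq q = F0 D μ ν κ q (pq q)) := by
  have hq := hpq q
  have hab : (Hf q 0 < F0 D μ ν κ q 0) ↔ 1 < (D - 1) * q ^ 2 := by
    unfold Hf F0
    have : μ * 0 / (κ * ν + 0) = 0 := by simp
    rw [this]
    constructor <;> intro h <;> nlinarith
  -- uniqueness of positive root
  have huniq : ∀ p : ℝ, 0 < p → Hf q p = F0 D μ ν κ q p → p = pq q := by
    intro p hp he
    have hb : 1 < (D - 1) * q ^ 2 := by
      rw [key_iff D μ ν κ q p hp hν hκ] at he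
      have : (0:ℝ) < μ * p / (κ * ν + p) := by positivity
      nlinarith
    obtain ⟨hpq0, heq⟩ := hq.2 hb
    rw [key_iff D μ ν κ q p hp hν hκ] at he
    by_contra hne
    rcases lt_or_gt_of_ne hne with h' | h'
    · have := g_mono μ ν κ hμ hν hκ hp h'
      rw [← he, ← heq] at this; exact lt_irrefl _ this
    · have := g_mono μ ν κ hμ hν hκ hpq0 h'
      rw [← he, ← heq] at this; exact lt_irrefl _ this
  refine ⟨hab, ?_, ?_⟩
  · rw [hab]
    constructor
    · intro hb
      obtain ⟨hpq0, heq⟩ := hq.2 hb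
      refine ⟨pq q, ⟨hpq0, ?_⟩, fun p hp => huniq p hp.1 hp.2⟩
      rw [key_iff D μ ν κ q (pq q) hpq0 hν hκ]; exact heq
    · rintro ⟨p, ⟨hp, he⟩, -⟩
      rw [key_iff D μ ν κ q p hp hν hκ] at he
      have : (0:ℝ) < μ * p / (κ * ν + p) := by positivity
      nlinarith
  · intro ha
    have hb := hab.mp ha
    obtain ⟨hpq0, heq⟩ := hq.2 hb
    refine ⟨huniq, rfl, ?_⟩
    have := (key_iff D μ ν κ q (pq q) hpq0 hν hκ).mpr heq
    rw [Hr, ← this]; rfl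
end
end

section
/- For every v ∈ ℝ one has L_r(v) ≤ v²/4 − 1, and if |v| ≤ 2/√(D−1) then L_r(v) = v²/4 − 1. In particular L_r(0) = −1. -/
open Real Filter Set

noncomputable section

/-- For every `v`, `L_r(v) ≤ v²/4 − 1`, with equality when
`|v| ≤ 2/√(D−1)`; in particular `L_r(0) = −1`. -/
theorem Lr_parabola_bounds
    (D μ ν κ : ℝ) (hD : 1 < D) (hμ : 0 < μ) (hν : 0 < ν) (hκ : 0 < κ)
    (pq : ℝ → ℝ) (hpq : IsCriticalSlope D μ ν κ pq) :
    (∀ v : ℝ, Lr pq v ≤ v ^ 2 / 4 - 1) ∧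
    (∀ v : ℝ, |v| ≤ 2 / Real.sqrt (D - 1) → Lr pq v = v ^ 2 / 4 - 1) ∧
    Lr pq 0 = -1 := by
  have hb : ∀ v q : ℝ, v * q - Hr pq q ≤ v ^ 2 / 4 - 1 := by
    intro v q
    have := sq_nonneg (pq q)
    have := sq_nonneg (v / 2 - q)
    simp only [Hr]
    nlinarith
  have hbdd : ∀ v : ℝ, BddAbove (Set.range fun q => v * q - Hr pq q) :=
    fun v => ⟨v ^ 2 / 4 - 1, by rintro _ ⟨q, rfl⟩; exact hb v q⟩
  have hupper : ∀ v : ℝ, Lr pq v ≤ v ^ 2 / 4 - 1 := fun v => ciSup_le (hb v)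
  have heq : ∀ v : ℝ, |v| ≤ 2 / Real.sqrt (D - 1) → Lr pq v = v ^ 2 / 4 - 1 := by
    intro v hv
    have hD1 : (0:ℝ) < D - 1 := by linarith
    have hs : 0 < Real.sqrt (D - 1) := Real.sqrt_pos.mpr hD1
    have hv2 : v ^ 2 * (D - 1) ≤ 4 := by
      have h1 : |v| * Real.sqrt (D - 1) ≤ 2 := by
        rw [le_div_iff₀ hs] at hv
        exact hv
      have h2 : (|v| * Real.sqrt (D - 1)) ^ 2 ≤ 2 ^ 2 := by
        apply sq_le_sq' <;> nlinarith [abs_nonneg v, hs.le, mul_nonneg (abs_nonneg v) hs.le]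
      have h3 : Real.sqrt (D - 1) ^ 2 = D - 1 := Real.sq_sqrt hD1.le
      have h4 : |v| ^ 2 = v ^ 2 := sq_abs v
      nlinarith
    have h0 : pq (v / 2) = 0 := (hpq (v / 2)).1 (by nlinarith)
    have hle : v ^ 2 / 4 - 1 ≤ Lr pq v := by
      have := le_ciSup (hbdd v) (v / 2)
      simp only [Hr, h0] at this
      calc v ^ 2 / 4 - 1 = v * (v / 2) - ((v / 2) ^ 2 + 0 ^ 2 + 1) := by ring
        _ ≤ Lr pq v := this
    exact le_antisymm (hupper v) hle
  refine ⟨hupper, heq, ?_⟩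
  have : |(0:ℝ)| ≤ 2 / Real.sqrt (D - 1) := by
    simp [le_div_iff₀ (Real.sqrt_pos.mpr (by linarith : (0:ℝ) < D - 1))]
  simpa using heq 0 this
end
end

section
/- For every x ≥ 0, the value function on the road satisfies J(x, 0) = L_r(x); that is, the minimum defining J(x,0) is achieved by the pure-road option, so that for all τ ∈ (0,1) and z ∈ [0,x] one has (1−τ)·L_f((x−z)/(1−τ), 0) + τ·L_r(z/τ) ≥ L_r(x), and also L_f(x,0) ≥ L_r(x). -/
open Real Filter Set

noncomputable section

/-
The road Lagrangian is the Legendre transform of `H_r ≥ q² + 1`, so it is convex (a supremum of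
affine functions) and bounded by the Legendre transform `v²/4 − 1 = L_f(v, 0)` of `q² + 1`.
Convexity makes the pure-road path `x` cheaper than any road-then-field path, because `x` is the
`(1 − τ, τ)`-average of the two velocities `(x − z)/(1 − τ)` and `z/τ`; the bound makes it cheaper
than the pure-field path.
-/

section LegendreTransform

variable {H : ℝ → ℝ}

theorem mul_sub_le_sq_div_four_sub_one (hH : ∀ q, q ^ 2 + 1 ≤ H q) (v q : ℝ) :
    v * q - H q ≤ v ^ 2 / 4 - 1 := by
  nlinarith [hH q, sq_nonneg (v / 2 - q)]

theorem bddAbove_range_mul_sub (hH : ∀ q, q ^ 2 + 1 ≤ H q) (v : ℝ) :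
    BddAbove (range fun q => v * q - H q) :=
  ⟨v ^ 2 / 4 - 1, forall_mem_range.2 (mul_sub_le_sq_div_four_sub_one hH v)⟩

theorem iSup_mul_sub_le_sq_div_four_sub_one (hH : ∀ q, q ^ 2 + 1 ≤ H q) (v : ℝ) :
    ⨆ q, (v * q - H q) ≤ v ^ 2 / 4 - 1 :=
  ciSup_le (mul_sub_le_sq_div_four_sub_one hH v)

theorem convexOn_iSup_mul_sub (hH : ∀ q, q ^ 2 + 1 ≤ H q) :
    ConvexOn ℝ univ fun v => ⨆ q, (v * q - H q) := by
  refine ⟨convex_univ, fun a _ b _ s t hs ht hst => ciSup_le fun q => ?_⟩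
  have ha := le_ciSup (bddAbove_range_mul_sub hH a) q
  have hb := le_ciSup (bddAbove_range_mul_sub hH b) q
  simp only [smul_eq_mul] at ha hb ⊢
  calc (s * a + t * b) * q - H q = s * (a * q - H q) + t * (b * q - H q) := by
        linear_combination H q * hst
    _ ≤ s * (⨆ q, (a * q - H q)) + t * ⨆ q, (b * q - H q) := by gcongr

end LegendreTransform

theorem sq_add_one_le_Hr (pq : ℝ → ℝ) (q : ℝ) : q ^ 2 + 1 ≤ Hr pq q := by
  unfold Hr; nlinarith [sq_nonneg (pq q)]

theorem Lr_le_Lf (pq : ℝ → ℝ) (v : ℝ) : Lr pq v ≤ Lf v 0 := by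
  simpa [Lr, Lf] using iSup_mul_sub_le_sq_div_four_sub_one (sq_add_one_le_Hr pq) v

theorem convexOn_Lr (pq : ℝ → ℝ) : ConvexOn ℝ univ (Lr pq) :=
  convexOn_iSup_mul_sub (sq_add_one_le_Hr pq)

theorem Lr_le_broken_path (pq : ℝ → ℝ) {x τ : ℝ} (z : ℝ) (hτ₀ : 0 < τ) (hτ₁ : τ < 1) :
    Lr pq x ≤ (1 - τ) * Lf ((x - z) / (1 - τ)) 0 + τ * Lr pq (z / τ) := by
  have hx : (1 - τ) * ((x - z) / (1 - τ)) + τ * (z / τ) = x := by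
    field_simp [(sub_pos.2 hτ₁).ne', hτ₀.ne']; ring
  calc Lr pq x ≤ (1 - τ) * Lr pq ((x - z) / (1 - τ)) + τ * Lr pq (z / τ) := by
        simpa [hx] using (convexOn_Lr pq).2 (mem_univ ((x - z) / (1 - τ))) (mem_univ (z / τ))
          (sub_pos.2 hτ₁).le hτ₀.le (sub_add_cancel 1 τ)
    _ ≤ (1 - τ) * Lf ((x - z) / (1 - τ)) 0 + τ * Lr pq (z / τ) := by
        gcongr
        exact Lr_le_Lf pq _

theorem isLeast_Jset_road (pq : ℝ → ℝ) (x : ℝ) : IsLeast (Jset pq x 0) (Lr pq x) := by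
  refine ⟨by simp [Jset], ?_⟩
  rintro c ((rfl | ⟨τ, z, hτ₀, hτ₁, -, -, rfl⟩) | hc)
  · exact Lr_le_Lf pq x
  · simpa using Lr_le_broken_path pq z hτ₀ hτ₁
  · rw [if_pos rfl, mem_singleton_iff] at hc
    exact hc.ge

theorem J_on_road_general
    (pq : ℝ → ℝ)
    (x : ℝ) (hx : 0 ≤ x) :
    J pq x 0 = Lr pq x ∧
    (∀ τ z : ℝ, 0 < τ → τ < 1 → 0 ≤ z → z ≤ x →
      Lr pq x ≤ (1 - τ) * Lf ((x - z) / (1 - τ)) 0 + τ * Lr pq (z / τ)) ∧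
    Lr pq x ≤ Lf x 0 := by
  refine ⟨?_, fun τ z hτ₀ hτ₁ _ _ => Lr_le_broken_path pq z hτ₀ hτ₁, Lr_le_Lf pq x⟩
  rw [J, abs_of_nonneg hx]
  exact (isLeast_Jset_road pq x).csInf_eq

/-- On the road `y = 0`, the value function is given by the pure-road cost:
`J(x,0) = L_r(x)` for `x ≥ 0`; indeed every broken path costs at least
`L_r(x)`, and so does the pure-field path. -/
theorem J_on_road
    (D μ ν κ : ℝ) (hD : 1 < D) (hμ : 0 < μ) (hν : 0 < ν) (hκ : 0 < κ)
    (pq : ℝ → ℝ) (hpq : IsCriticalSlope D μ ν κ pq)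
    (x : ℝ) (hx : 0 ≤ x) :
    J pq x 0 = Lr pq x ∧
    (∀ τ z : ℝ, 0 < τ → τ < 1 → 0 ≤ z → z ≤ x →
      Lr pq x ≤ (1 - τ) * Lf ((x - z) / (1 - τ)) 0 + τ * Lr pq (z / τ)) ∧
    Lr pq x ≤ Lf x 0 :=
  J_on_road_general pq x hx
end
end

section
/- The value function is strictly radially increasing: for each ϑ ∈ [0, π/2], the map r ↦ J(r sin ϑ, r cos ϑ) is strictly increasing on [0, ∞). -/
/-!
`J + 1` is sub-homogeneous along rays: the costs `Lf + 1` and `Lr + 1` are convex and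
vanish at the origin (`Lr + 1` is the Legendre transform of `Hr - 1 ≥ 0`), so rescaling a
candidate path by `l ∈ [0, 1]` gives `J(l·p) + 1 ≤ l·(J(p) + 1)`. It therefore suffices that
`J(p) > -1` for `p ≠ 0`. Since `p_q = 0` for small `q`, `Lr(v) + 1 > 0` for `v > 0`; and every
candidate cost `c` satisfies `c + 1 ≥ (Lf(x - z, y) + 1) + (Lr(z) + 1)` for its road length
`z ∈ [0, x]`, a bound that stays away from `0` uniformly in `z`.
-/

open Real Filter Set

noncomputable section

open Topology

variable {pq : ℝ → ℝ}

lemma Lf_add_one (a b : ℝ) : Lf a b + 1 = (a ^ 2 + b ^ 2) / 4 := by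
  unfold Lf; ring

lemma Lf_mul_add_one_le {l : ℝ} (hl0 : 0 ≤ l) (hl1 : l ≤ 1) (a b : ℝ) :
    Lf (l * a) (l * b) + 1 ≤ l * (Lf a b + 1) := by
  rw [Lf_add_one, Lf_add_one]
  nlinarith [mul_nonneg (mul_nonneg hl0 (sub_nonneg.2 hl1))
    (add_nonneg (sq_nonneg a) (sq_nonneg b))]

lemma one_le_Hr (pq : ℝ → ℝ) (q : ℝ) : 1 ≤ Hr pq q := by
  unfold Hr; nlinarith [sq_nonneg q, sq_nonneg (pq q)]

lemma bddAbove_range_Lr (pq : ℝ → ℝ) (v : ℝ) :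
    BddAbove (range fun q => v * q - Hr pq q) := by
  refine ⟨v ^ 2 / 4 - 1, ?_⟩
  rintro _ ⟨q, rfl⟩
  unfold Hr
  nlinarith [sq_nonneg (v / 2 - q), sq_nonneg (pq q)]

lemma le_Lr (pq : ℝ → ℝ) (v q : ℝ) : v * q - Hr pq q ≤ Lr pq v :=
  le_ciSup (bddAbove_range_Lr pq v) q

lemma Lr_mul_add_one_le {l : ℝ} (hl0 : 0 ≤ l) (hl1 : l ≤ 1) (v : ℝ) :
    Lr pq (l * v) + 1 ≤ l * (Lr pq v + 1) := by
  suffices Lr pq (l * v) ≤ l * Lr pq v - (1 - l) by linarith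
  refine ciSup_le fun q => ?_
  nlinarith [mul_nonneg (sub_nonneg.2 hl1) (sub_nonneg.2 (one_le_Hr pq q)),
    mul_nonneg hl0 (sub_nonneg.2 (le_Lr pq v q))]

lemma Lr_zero_add_one_nonpos : Lr pq 0 + 1 ≤ 0 := by
  simpa using Lr_mul_add_one_le (pq := pq) le_rfl zero_le_one 0

lemma Lr_add_one_nonneg (h0 : pq 0 = 0) (v : ℝ) : 0 ≤ Lr pq v + 1 := by
  have h := le_Lr pq v 0
  simp only [Hr, h0, mul_zero] at h
  linarith

lemma monotoneOn_Lr (h0 : pq 0 = 0) : MonotoneOn (Lr pq) (Ici 0) := by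
  intro a ha b hb hab
  rcases (mem_Ici.1 hb).eq_or_lt with rfl | hb'
  · rw [le_antisymm hab ha]
  have hab' : a / b * b = a := div_mul_cancel₀ a hb'.ne'
  have h := Lr_mul_add_one_le (pq := pq) (div_nonneg ha hb'.le) ((div_le_one hb').2 hab) b
  rw [hab'] at h
  nlinarith [Lr_add_one_nonneg h0 b, (div_le_one hb').2 hab]

lemma IsCriticalSlope.Lr_add_one_pos {D μ ν κ : ℝ} (hpq : IsCriticalSlope D μ ν κ pq)
    {v : ℝ} (hv : 0 < v) : 0 < Lr pq v + 1 := by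
  have hsmall : ∀ᶠ q in 𝓝 (0 : ℝ), (D - 1) * q ^ 2 < 1 ∧ q < v :=
    ((continuous_const.mul (continuous_pow 2)).continuousAt.eventually_lt continuousAt_const
      (by simp)).and (eventually_lt_nhds hv)
  obtain ⟨q, ⟨hDq, hqv⟩, hq⟩ :=
    ((hsmall.filter_mono (nhdsWithin_le_nhds (s := Ioi 0))).and self_mem_nhdsWithin).exists
  have h := le_Lr pq v q
  rw [Hr, (hpq q).1 hDq.le] at h
  nlinarith [mul_pos (mem_Ioi.1 hq) (sub_pos.2 hqv)]

lemma mem_Jset {x y c : ℝ} :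
    c ∈ Jset pq x y ↔ c = Lf x y ∨
      (∃ τ z : ℝ, 0 < τ ∧ τ < 1 ∧ 0 ≤ z ∧ z ≤ x ∧
        c = (1 - τ) * Lf ((x - z) / (1 - τ)) (y / (1 - τ)) + τ * Lr pq (z / τ)) ∨
      (y = 0 ∧ c = Lr pq x) := by
  simp only [Jset, mem_union, mem_singleton_iff, mem_ofPred_eq, or_assoc]
  split_ifs with hy <;> simp [hy]

lemma Lf_mem_Jset (x y : ℝ) : Lf x y ∈ Jset pq x y :=
  mem_Jset.2 (Or.inl rfl)

lemma bddBelow_Jset (h0 : pq 0 = 0) (x y : ℝ) : BddBelow (Jset pq x y) := by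
  refine ⟨-1, fun c hc => ?_⟩
  rcases mem_Jset.1 hc with rfl | ⟨τ, z, hτ0, hτ1, -, -, rfl⟩ | ⟨-, rfl⟩
  · linarith [Lf_add_one x y, add_nonneg (sq_nonneg x) (sq_nonneg y)]
  · have hLf := Lf_add_one ((x - z) / (1 - τ)) (y / (1 - τ))
    nlinarith [mul_nonneg (sub_nonneg.2 hτ1.le)
        (add_nonneg (sq_nonneg ((x - z) / (1 - τ))) (sq_nonneg (y / (1 - τ)))),
      mul_nonneg hτ0.le (Lr_add_one_nonneg h0 (z / τ))]
  · linarith [Lr_add_one_nonneg h0 x]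

lemma exists_mem_Jset_mul_add_one_le {x y l c : ℝ} (hl0 : 0 ≤ l) (hl1 : l ≤ 1)
    (hc : c ∈ Jset pq x y) : ∃ c' ∈ Jset pq (l * x) (l * y), c' + 1 ≤ l * (c + 1) := by
  rcases mem_Jset.1 hc with rfl | ⟨τ, z, hτ0, hτ1, hz0, hzx, rfl⟩ | ⟨rfl, rfl⟩
  · exact ⟨_, Lf_mem_Jset _ _, Lf_mul_add_one_le hl0 hl1 x y⟩
  · refine ⟨(1 - τ) * Lf (l * ((x - z) / (1 - τ))) (l * (y / (1 - τ))) +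
      τ * Lr pq (l * (z / τ)), mem_Jset.2 (Or.inr (Or.inl
        ⟨τ, l * z, hτ0, hτ1, mul_nonneg hl0 hz0, mul_le_mul_of_nonneg_left hzx hl0,
          by ring_nf⟩)), ?_⟩
    nlinarith [mul_le_mul_of_nonneg_left (Lf_mul_add_one_le hl0 hl1
        ((x - z) / (1 - τ)) (y / (1 - τ))) (sub_nonneg.2 hτ1.le),
      mul_le_mul_of_nonneg_left (Lr_mul_add_one_le (pq := pq) hl0 hl1 (z / τ)) hτ0.le]
  · exact ⟨Lr pq (l * x), mem_Jset.2 (Or.inr (Or.inr ⟨mul_zero l, rfl⟩)),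
      Lr_mul_add_one_le hl0 hl1 x⟩

lemma sInf_Jset_mul_add_one_le (h0 : pq 0 = 0) {l : ℝ} (hl0 : 0 ≤ l) (hl1 : l ≤ 1)
    (x y : ℝ) : sInf (Jset pq (l * x) (l * y)) + 1 ≤ l * (sInf (Jset pq x y) + 1) := by
  have hmono : Monotone fun c : ℝ => l * (c + 1) := fun _ _ hab =>
    mul_le_mul_of_nonneg_left (by linarith) hl0
  rw [hmono.map_csInf_of_continuousAt (by fun_prop) ⟨_, Lf_mem_Jset x y⟩
    (bddBelow_Jset h0 x y)]
  refine le_csInf (Set.Nonempty.image _ ⟨_, Lf_mem_Jset x y⟩) ?_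
  rintro _ ⟨c, hc, rfl⟩
  obtain ⟨c', hc', hle⟩ := exists_mem_Jset_mul_add_one_le hl0 hl1 hc
  linarith [csInf_le (bddBelow_Jset h0 _ _) hc']

/-- Splitting each candidate at its road length `z`, convexity of `Lf + 1` and `Lr + 1`
removes the time parametrisation. -/
lemma exists_le_of_mem_Jset {x y c : ℝ} (hx : 0 ≤ x) (hc : c ∈ Jset pq x y) :
    ∃ z ∈ Icc 0 x, Lf (x - z) y + 1 + (Lr pq z + 1) ≤ c + 1 := by
  rcases mem_Jset.1 hc with rfl | ⟨τ, z, hτ0, hτ1, hz0, hzx, rfl⟩ | ⟨rfl, rfl⟩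
  · refine ⟨0, ⟨le_rfl, hx⟩, ?_⟩
    rw [sub_zero]
    linarith [Lr_zero_add_one_nonpos (pq := pq)]
  · refine ⟨z, ⟨hz0, hzx⟩, ?_⟩
    have hfield := Lf_mul_add_one_le (sub_nonneg.2 hτ1.le) (by linarith)
      ((x - z) / (1 - τ)) (y / (1 - τ))
    have hroad := Lr_mul_add_one_le (pq := pq) hτ0.le hτ1.le (z / τ)
    rw [mul_div_cancel₀ _ (sub_pos.2 hτ1).ne', mul_div_cancel₀ _ (sub_pos.2 hτ1).ne'] at hfield
    rw [mul_div_cancel₀ _ hτ0.ne'] at hroad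
    linarith
  · exact ⟨x, ⟨hx, le_rfl⟩, by simp [Lf]⟩

lemma IsCriticalSlope.sInf_Jset_add_one_pos {D μ ν κ : ℝ}
    (hpq : IsCriticalSlope D μ ν κ pq) {x y : ℝ} (hx : 0 ≤ x) (hxy : (x, y) ≠ 0) :
    0 < sInf (Jset pq x y) + 1 := by
  have h0 : pq 0 = 0 := (hpq 0).1 (by simp)
  set m := min (x ^ 2 / 16) (Lr pq (x / 2) + 1)
  have hgap : 0 < m + y ^ 2 / 4 := by
    rcases hx.eq_or_lt with rfl | hx'
    · have hy : y ≠ 0 := fun hy => hxy (by simp [hy])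
      have : 0 ≤ m := le_min (by positivity) (Lr_add_one_nonneg h0 _)
      positivity
    · have : 0 < m := lt_min (by positivity) (hpq.Lr_add_one_pos (half_pos hx'))
      positivity
  suffices ∀ c ∈ Jset pq x y, m + y ^ 2 / 4 - 1 ≤ c by
    linarith [le_csInf ⟨_, Lf_mem_Jset x y⟩ this]
  intro c hc
  obtain ⟨z, ⟨hz0, hzx⟩, hle⟩ := exists_le_of_mem_Jset hx hc
  rw [Lf_add_one] at hle
  rcases le_total z (x / 2) with hz | hz
  · have : x ^ 2 / 16 ≤ (x - z) ^ 2 / 4 := by nlinarith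
    linarith [min_le_left (x ^ 2 / 16) (Lr pq (x / 2) + 1), Lr_add_one_nonneg h0 z]
  · have := monotoneOn_Lr h0 (mem_Ici.2 (by positivity)) (mem_Ici.2 hz0) hz
    linarith [min_le_right (x ^ 2 / 16) (Lr pq (x / 2) + 1), sq_nonneg (x - z)]

lemma IsCriticalSlope.strictMonoOn_J_mul {D μ ν κ : ℝ} (hpq : IsCriticalSlope D μ ν κ pq)
    {x y : ℝ} (hxy : (x, y) ≠ 0) :
    StrictMonoOn (fun r : ℝ => J pq (r * x) (r * y)) (Ici 0) := by
  intro r₁ hr₁ r₂ hr₂ h12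
  have h0 : pq 0 = 0 := (hpq 0).1 (by simp)
  have hr₂' : 0 < r₂ := (mem_Ici.1 hr₁).trans_lt h12
  set l := r₁ / r₂
  have hl1 : l < 1 := (div_lt_one hr₂').2 h12
  have hr₁l : r₁ = l * r₂ := (div_mul_cancel₀ r₁ hr₂'.ne').symm
  have hscale := sInf_Jset_mul_add_one_le h0 (div_nonneg hr₁ hr₂'.le) hl1.le (r₂ * |x|) (r₂ * y)
  have hpos := hpq.sInf_Jset_add_one_pos (x := r₂ * |x|) (y := r₂ * y) (by positivity)
    fun h => hxy (by simp_all [Prod.mk_eq_zero, hr₂'.ne'])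
  simp only [J, abs_mul, abs_of_nonneg (mem_Ici.1 hr₁), abs_of_pos hr₂']
  rw [hr₁l, mul_assoc, mul_assoc]
  linarith [mul_lt_of_lt_one_left hpos hl1]

theorem J_strictly_radially_increasing_general
    (D μ ν κ : ℝ)
    (pq : ℝ → ℝ) (hpq : IsCriticalSlope D μ ν κ pq)
    (ϑ : ℝ) :
    StrictMonoOn (fun r : ℝ => J pq (r * Real.sin ϑ) (r * Real.cos ϑ))
      (Set.Ici 0) := by
  refine hpq.strictMonoOn_J_mul fun h => ?_
  simpa [(Prod.mk_eq_zero.1 h).1, (Prod.mk_eq_zero.1 h).2] using sin_sq_add_cos_sq ϑ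

/-- The value function is strictly radially increasing: for each direction
`ϑ ∈ [0, π/2]`, the map `r ↦ J(r sin ϑ, r cos ϑ)` is strictly increasing on
`[0, ∞)`. -/
theorem J_strictly_radially_increasing
    (D μ ν κ : ℝ) (hD : 1 < D) (hμ : 0 < μ) (hν : 0 < ν) (hκ : 0 < κ)
    (pq : ℝ → ℝ) (hpq : IsCriticalSlope D μ ν κ pq)
    (ϑ : ℝ) (hϑ0 : 0 ≤ ϑ) (hϑ : ϑ≤ π / 2) :
    StrictMonoOn (fun r : ℝ => J pq (r * Real.sin ϑ) (r * Real.cos ϑ))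
      (Set.Ici 0) :=
  J_strictly_radially_increasing_general D μ ν κ pq hpq ϑ
end
end

section
/- There exists a unique c > 0 such that L_r(c) = 0. Moreover, this c is characterized as the minimum of H_r(q)/q over q > 0: the infimum inf_{q>0} H_r(q)/q is attained and equals c. -/
open Real Filter Set

noncomputable section

private lemma g_lt_g {μ c0 : ℝ} (hμ : 0 < μ) (hc : 0 < c0) {a b : ℝ} (ha : 0 ≤ a) (hab : a < b) :
    a ^ 2 + 1 + μ * a / (c0 + a) < b ^ 2 + 1 + μ * b / (c0 + b) := by
  have h1 : (0:ℝ) < c0 + a := by linarith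
  have h2 : (0:ℝ) < c0 + b := by linarith
  have h3 : μ * a / (c0 + a) ≤ μ * b / (c0 + b) := by
    rw [div_le_div_iff₀ h1 h2]; nlinarith [mul_pos hμ hc]
  have h4 : a ^ 2 < b ^ 2 := by nlinarith
  linarith

private lemma g_lt_rev {μ c0 : ℝ} (hμ : 0 < μ) (hc : 0 < c0) {a b : ℝ} (ha : 0 ≤ a) (hb : 0 ≤ b)
    (h : a ^ 2 + 1 + μ * a / (c0 + a) < b ^ 2 + 1 + μ * b / (c0 + b)) : a < b := by
  by_contra hab
  push_neg at hab
  rcases eq_or_lt_of_le hab with rfl | hlt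
  · exact lt_irrefl _ h
  · exact absurd h (not_lt.2 (g_lt_g hμ hc hb hlt).le)

private lemma pq_continuous {D μ ν κ : ℝ} (hμ : 0 < μ) (hν : 0 < ν) (hκ : 0 < κ)
    (pq : ℝ → ℝ) (hpq : IsCriticalSlope D μ ν κ pq) : Continuous pq := by
  have hc0 : 0 < κ * ν := mul_pos hκ hν
  have hr : Continuous (fun q : ℝ => (D - 1) * q ^ 2) := by continuity
  rw [continuous_iff_continuousAt]
  intro q0
  rw [Metric.continuousAt_iff]
  intro ε hε
  rcases le_or_gt ((D - 1) * q0 ^ 2) 1 with h0 | h0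
  · have hq00 : pq q0 = 0 := (hpq q0).1 h0
    set G := (ε/2) ^ 2 + 1 + μ * (ε/2) / (κ*ν + ε/2) with hG
    have hG1 : (1:ℝ) < G := by
      have h := g_lt_g (a := 0) (b := ε/2) hμ hc0 le_rfl (by linarith)
      simpa using h
    have hU : IsOpen ((fun q : ℝ => (D-1) * q^2) ⁻¹' Iio G) := isOpen_Iio.preimage hr
    have hq0U : q0 ∈ ((fun q : ℝ => (D-1) * q^2) ⁻¹' Iio G) := by
      simp only [Set.mem_preimage, Set.mem_Iio]; linarith
    obtain ⟨δ, hδ, hball⟩ := Metric.isOpen_iff.1 hU q0 hq0U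
    refine ⟨δ, hδ, ?_⟩
    intro q hdq
    have hqU : (D-1)*q^2 < G := hball (by simpa [Metric.mem_ball] using hdq)
    rcases le_or_gt ((D - 1) * q ^ 2) 1 with h | h
    · rw [(hpq q).1 h, hq00, dist_self]; exact hε
    · obtain ⟨hpos, heq⟩ := (hpq q).2 h
      have hlt : pq q < ε/2 := by
        refine g_lt_rev hμ hc0 hpos.le (by linarith) ?_
        rw [← heq]; exact hqU
      rw [hq00, Real.dist_eq, sub_zero, abs_of_pos hpos]; linarith
  · obtain ⟨hp0, heq0⟩ := (hpq q0).2 h0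
    set e := min ε (pq q0) / 2 with he_def
    have he : 0 < e := div_pos (lt_min hε hp0) two_pos
    have heε : e ≤ ε/2 := by
      have := min_le_left ε (pq q0); rw [he_def]; linarith
    have hep : e ≤ pq q0 / 2 := by
      have := min_le_right ε (pq q0); rw [he_def]; linarith
    set lo := pq q0 - e with hlo_def
    set hi := pq q0 + e with hhi_def
    have hlo : 0 < lo := by rw [hlo_def]; linarith
    set Glo := lo ^ 2 + 1 + μ * lo / (κ*ν + lo) with hGlo
    set Ghi := hi ^ 2 + 1 + μ * hi / (κ*ν + hi) with hGhi
    have h1Glo : (1:ℝ) < Glo := by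
      have h := g_lt_g (a := 0) (b := lo) hμ hc0 le_rfl hlo
      simpa [hGlo] using h
    have hGlolt : Glo < (D-1) * q0 ^ 2 := by
      rw [heq0]; exact g_lt_g hμ hc0 hlo.le (by rw [hlo_def]; linarith)
    have hGhigt : (D-1) * q0 ^ 2 < Ghi := by
      rw [heq0]; exact g_lt_g hμ hc0 hp0.le (by rw [hhi_def]; linarith)
    have hU : IsOpen ((fun q : ℝ => (D-1) * q^2) ⁻¹' Ioo Glo Ghi) := isOpen_Ioo.preimage hr
    have hq0U : q0 ∈ ((fun q : ℝ => (D-1) * q^2) ⁻¹' Ioo Glo Ghi) := ⟨hGlolt, hGhigt⟩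
    obtain ⟨δ, hδ, hball⟩ := Metric.isOpen_iff.1 hU q0 hq0U
    refine ⟨δ, hδ, ?_⟩
    intro q hdq
    obtain ⟨hq1, hq2⟩ := hball (by simpa [Metric.mem_ball] using hdq)
    have h1q : 1 < (D-1) * q ^ 2 := lt_trans h1Glo hq1
    obtain ⟨hpos, heq⟩ := (hpq q).2 h1q
    have hlt1 : lo < pq q := by
      refine g_lt_rev hμ hc0 hlo.le hpos.le ?_
      rw [← heq]; exact hq1
    have hlt2 : pq q < hi := by
      refine g_lt_rev hμ hc0 hpos.le (by linarith) ?_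
      rw [← heq]; exact hq2
    have habs : |pq q - pq q0| < e := abs_sub_lt_iff.2 ⟨by rw [hhi_def] at hlt2; linarith,
      by rw [hlo_def] at hlt1; linarith⟩
    rw [Real.dist_eq]; linarith

/-- There is a unique `c > 0` with `L_r(c) = 0`, and it is the attained
minimum of `H_r(q)/q` over `q > 0`. -/
theorem road_speed_characterization
    (D μ ν κ : ℝ) (hD : 1 < D) (hμ : 0 < μ) (hν : 0 < ν) (hκ : 0 < κ)
    (pq : ℝ → ℝ) (hpq : IsCriticalSlope D μ ν κ pq) :
    (∃! c : ℝ, 0 < c ∧ Lr pq c = 0) ∧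
    (∀ c : ℝ, 0 < c → Lr pq c = 0 →
      IsLeast ((fun q => Hr pq q / q) '' Set.Ioi (0 : ℝ)) c) := by
  have hpqc : Continuous pq := pq_continuous hμ hν hκ pq hpq
  have hHrc : Continuous (Hr pq) := by
    unfold Hr
    exact ((continuous_pow 2).add (hpqc.pow 2)).add continuous_const
  have hHr1 : ∀ q : ℝ, q ^ 2 + 1 ≤ Hr pq q := by
    intro q; unfold Hr; nlinarith [sq_nonneg (pq q)]
  set B := Hr pq 1 with hB_def
  have hB2 : (2:ℝ) ≤ B := by have := hHr1 1; rw [hB_def]; norm_num at this ⊢; linarith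
  have hBpos : (0:ℝ) < B := by linarith
  have hBinv : (0:ℝ) < 1/B := by positivity
  have h1mem : (1:ℝ) ∈ Icc (1/B) B := ⟨by rw [div_le_one hBpos]; linarith, by linarith⟩
  have hfc : ContinuousOn (fun q => Hr pq q / q) (Icc (1/B) B) := by
    apply ContinuousOn.div hHrc.continuousOn continuousOn_id
    intro q hq
    exact ne_of_gt (lt_of_lt_of_le hBinv hq.1)
  obtain ⟨qs, hqsI, hqsmin⟩ := isCompact_Icc.exists_isMinOn ⟨1, h1mem⟩ hfc
  have hqspos : 0 < qs := lt_of_lt_of_le hBinv hqsI.1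
  set m := Hr pq qs / qs with hm_def
  have hfq_ge : ∀ q : ℝ, 0 < q → q ≤ Hr pq q / q ∧ 1/q ≤ Hr pq q / q := by
    intro q hq
    constructor
    · rw [le_div_iff₀ hq]; nlinarith [hHr1 q]
    · rw [div_le_div_iff₀ hq hq]; nlinarith [hHr1 q, sq_nonneg q]
  have hm_least : IsLeast ((fun q => Hr pq q / q) '' Set.Ioi (0:ℝ)) m := by
    constructor
    · exact ⟨qs, hqspos, hm_def.symm⟩
    · rintro y ⟨q, hq, rfl⟩
      simp only [Set.mem_Ioi] at hq
      by_cases hqI : q ∈ Icc (1/B) B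
      · exact isMinOn_iff.mp hqsmin q hqI
      · have hm1 : m ≤ B := by
          have h := isMinOn_iff.mp hqsmin 1 h1mem
          simpa using h
        rw [Set.mem_Icc, not_and_or] at hqI
        rcases hqI with h | h
        · push_neg at h
          have h2 := (hfq_ge q hq).2
          have h3 : q * B < 1 := (lt_div_iff₀ hBpos).1 h
          have h4 : B < 1/q := by rw [lt_div_iff₀ hq]; nlinarith
          linarith
        · push_neg at h
          have h2 := (hfq_ge q hq).1
          linarith
  have hmpos : 0 < m := lt_of_lt_of_le hqspos (hfq_ge qs hqspos).1
  have hmqs : m * qs = Hr pq qs := by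
    rw [hm_def]; exact div_mul_cancel₀ _ (ne_of_gt hqspos)
  have hmq : ∀ q : ℝ, 0 < q → m * q ≤ Hr pq q := by
    intro q hq
    have h := hm_least.2 ⟨q, hq, rfl⟩
    rw [le_div_iff₀ hq] at h
    exact h
  have hbdd : ∀ v : ℝ, BddAbove (Set.range fun q => v * q - Hr pq q) := by
    intro v
    refine ⟨v^2/4 - 1, ?_⟩
    rintro x ⟨q, rfl⟩
    have := hHr1 q
    simp only
    nlinarith [sq_nonneg (v - 2*q)]
  have hLr_m : Lr pq m = 0 := by
    unfold Lr
    apply le_antisymm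
    · apply ciSup_le
      intro q
      rcases le_or_gt q 0 with h | h
      · nlinarith [hHr1 q, sq_nonneg q, mul_nonneg hmpos.le (neg_nonneg.2 h)]
      · linarith [hmq q h]
    · have h : m * qs - Hr pq qs ≤ ⨆ q, (m * q - Hr pq q) := le_ciSup (hbdd m) qs
      linarith
  have huniq : ∀ c : ℝ, 0 < c → Lr pq c = 0 → c = m := by
    intro c hc hLc
    rcases lt_trichotomy c m with hlt | heq | hgt
    · exfalso
      set t := min (1/2 : ℝ) ((m - c)/(2*c)) with ht_def
      have htpos : 0 < t := lt_min (by norm_num) (div_pos (by linarith) (by linarith))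
      have hle : Lr pq c ≤ -t := by
        unfold Lr
        apply ciSup_le
        intro q
        have ht1 : t ≤ 1/2 := min_le_left _ _
        have ht2 : t ≤ (m - c)/(2*c) := min_le_right _ _
        rcases le_or_gt q (1/(2*c)) with h | h
        · have hcq : c * q ≤ 1/2 := by
            rcases le_or_gt q 0 with h0 | h0
            · nlinarith
            · have h5 : q * (2*c) ≤ 1 := (le_div_iff₀ (by positivity)).1 h
              nlinarith
          nlinarith [hHr1 q, sq_nonneg q]
        · have hq0 : 0 < q := lt_trans (by positivity) h
          have h1 := hmq q hq0
          have h5 : 1 < q * (2*c) := (div_lt_iff₀ (by positivity)).1 h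
          have h3 : (m - c)/(2*c) ≤ (m - c) * q := by
            rw [div_le_iff₀ (by positivity)]
            nlinarith
          linarith
      rw [hLc] at hle; linarith
    · exact heq
    · exfalso
      have h2 : c * qs - Hr pq qs ≤ ⨆ q, (c * q - Hr pq q) := le_ciSup (hbdd c) qs
      have h3 : 0 < c * qs - Hr pq qs := by nlinarith [hmqs]
      unfold Lr at hLc
      linarith
  refine ⟨⟨m, ⟨hmpos, hLr_m⟩, fun c hc => huniq c hc.1 hc.2⟩, ?_⟩
  intro c hc hLc
  rw [huniq c hc hLc]
  exact hm_least
end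
end

section
/- If 1 < D ≤ 2, then inf_{q>0} H_r(q)/q = 2. If D > 2, then inf_{q>0} H_r(q)/q > 2. -/
open Real Filter Set

noncomputable section

set_option maxHeartbeats 1000000 in
/-- The road speed equals `2` when `1 < D ≤ 2`, and exceeds `2` when `D > 2`. -/
theorem roadSpeed_threshold
    (D μ ν κ : ℝ) (hD : 1 < D) (hμ : 0 < μ) (hν : 0 < ν) (hκ : 0 < κ)
    (pq : ℝ → ℝ) (hpq : IsCriticalSlope D μ ν κ pq) :
    (D ≤ 2 → roadSpeed pq = 2) ∧ (2 < D → 2 < roadSpeed pq) := by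
  have hD1 : 0 < D - 1 := by linarith
  have hk : 0 < κ * ν := mul_pos hκ hν
  have hbasic : ∀ q : ℝ, 0 < q → 2 * q ≤ Hr pq q := by
    intro q hq
    have h1 := sq_nonneg (pq q)
    have h2 := sq_nonneg (q - 1)
    simp only [Hr]; nlinarith
  have hne : ((fun q => Hr pq q / q) '' Set.Ioi (0 : ℝ)).Nonempty :=
    ⟨Hr pq 1 / 1, ⟨1, by norm_num, rfl⟩⟩
  have hbdd : BddBelow ((fun q => Hr pq q / q) '' Set.Ioi (0 : ℝ)) := by
    refine ⟨2, ?_⟩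
    rintro b ⟨q, hq, rfl⟩
    rw [Set.mem_Ioi] at hq
    rw [le_div_iff₀ hq]
    exact hbasic q hq
  have hge2 : 2 ≤ roadSpeed pq := by
    apply le_csInf hne
    rintro b ⟨q, hq, rfl⟩
    rw [Set.mem_Ioi] at hq
    rw [le_div_iff₀ hq]
    exact hbasic q hq
  constructor
  · intro hD2
    refine le_antisymm ?_ hge2
    have hpq1 : pq 1 = 0 := (hpq 1).1 (by nlinarith)
    have hmem : (2 : ℝ) ∈ ((fun q => Hr pq q / q) '' Set.Ioi (0 : ℝ)) := by
      refine ⟨1, by norm_num, ?_⟩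
      simp [Hr, hpq1]
      norm_num
    exact csInf_le hbdd hmem
  · intro hD2
    -- setup
    set q0 : ℝ := Real.sqrt (1 / (D - 1)) with hq0def
    have hq0pos : 0 < q0 := Real.sqrt_pos.2 (by positivity)
    have hq0sq : q0 ^ 2 = 1 / (D - 1) := Real.sq_sqrt (by positivity)
    have hq0lt1 : q0 < 1 := by
      have h : (1 : ℝ) / (D - 1) < 1 := by
        rw [div_lt_one hD1]; linarith
      nlinarith [hq0sq, hq0pos]
    set q2 : ℝ := (q0 + 1) / 2 with hq2def
    have hq2pos : 0 < q2 := by positivity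
    have hq2lt1 : q2 < 1 := by rw [hq2def]; linarith
    have hq0ltq2 : q0 < q2 := by rw [hq2def]; linarith
    have hA : 0 < (D - 1) * q2 ^ 2 - 1 := by
      have h1 : q0 ^ 2 < q2 ^ 2 := by nlinarith
      have h2 : (D - 1) * q0 ^ 2 = 1 := by
        rw [hq0sq]; field_simp
      nlinarith
    set A : ℝ := (D - 1) * q2 ^ 2 - 1 with hAdef
    set t : ℝ := min 1 (min (Real.sqrt (A / 2)) (A * (κ * ν) / (2 * μ))) with htdef
    have ht : 0 < t := by
      apply lt_min one_pos
      exact lt_min (Real.sqrt_pos.2 (by positivity)) (by positivity)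
    have ht1 : t ≤ 1 := min_le_left _ _
    have ht2 : t ^ 2 ≤ A / 2 := by
      have h : t ≤ Real.sqrt (A / 2) := le_trans (min_le_right _ _) (min_le_left _ _)
      have := Real.sq_sqrt (by positivity : (0:ℝ) ≤ A / 2)
      nlinarith [Real.sqrt_nonneg (A / 2)]
    have ht3 : μ * t / (κ * ν) ≤ A / 2 := by
      have h : t ≤ A * (κ * ν) / (2 * μ) := le_trans (min_le_right _ _) (min_le_right _ _)
      rw [div_le_iff₀ hk]
      rw [le_div_iff₀ (by positivity : (0:ℝ) < 2 * μ)] at h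
      nlinarith
    clear_value q0 q2 A t
    -- key: pq q ≥ t for q ≥ q2
    have hpq_ge : ∀ q : ℝ, q2 ≤ q → t ≤ pq q := by
      intro q hq
      have hqsq : (D - 1) * q2 ^ 2 ≤ (D - 1) * q ^ 2 := by
        nlinarith [mul_nonneg (sub_nonneg.2 hq) (by linarith : (0:ℝ) ≤ q + q2)]
      have hgt : 1 < (D - 1) * q ^ 2 := by nlinarith
      obtain ⟨hp, heq⟩ := (hpq q).2 hgt
      by_contra hcon
      push_neg at hcon
      have hkp : 0 < κ * ν + pq q := by linarith
      have hfrac : μ * pq q / (κ * ν + pq q) ≤ μ * pq q / (κ * ν) := by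
        rw [div_le_div_iff₀ hkp hk]
        nlinarith
      have h1 : pq q ^ 2 < t ^ 2 := by nlinarith
      have h2 : μ * pq q / (κ * ν) ≤ A / 2 := by
        rw [div_le_iff₀ hk] at ht3 ⊢
        nlinarith
      nlinarith
    -- δ
    set c : ℝ := (1 - q2) ^ 2 with hcdef
    have hc : 0 < c := by
      have h : 0 < 1 - q2 := by linarith
      positivity
    set δ : ℝ := min c (min (t ^ 2 / 3) 1) with hδdef
    have hδ : 0 < δ := lt_min hc (lt_min (by positivity) one_pos)
    have hδc : δ ≤ c := min_le_left _ _
    have hδt : δ ≤ t ^ 2 / 3 := le_trans (min_le_right _ _) (min_le_left _ _)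
    have hδ1 : δ ≤ 1 := le_trans (min_le_right _ _) (min_le_right _ _)
    clear_value c δ
    have hbound : ∀ q : ℝ, 0 < q → (2 + δ) * q ≤ Hr pq q := by
      intro q hq
      simp only [Hr]
      rcases le_or_gt q q2 with hcase | hcase
      · -- small q : q + 1/q large
        have hpq2 := sq_nonneg (pq q)
        have h1 : 0 ≤ (q2 - q) * (2 - q - q2) := by
          apply mul_nonneg (by linarith) (by linarith)
        have h2 : 0 ≤ (1 - q2) ^ 2 * (1 - q) := by
          apply mul_nonneg (sq_nonneg _) (by linarith)
        nlinarith
      · rcases le_or_gt q 3 with hcase3 | hcase3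
        · have hptq : t ≤ pq q := hpq_ge q hcase.le
          have h1 : t ^ 2 ≤ pq q ^ 2 := by nlinarith
          have h2 := sq_nonneg (q - 1)
          have h3 : 0 ≤ (t ^ 2 / 3 - δ) * q := mul_nonneg (by linarith) hq.le
          have h4 : 0 ≤ (t ^ 2 / 3) * (3 - q) := by
            apply mul_nonneg (by positivity) (by linarith)
          nlinarith
        · have hpq2 := sq_nonneg (pq q)
          nlinarith
    have hge : 2 + δ ≤ roadSpeed pq := by
      apply le_csInf hne
      rintro b ⟨q, hq, rfl⟩
      rw [Set.mem_Ioi] at hq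
      rw [le_div_iff₀ hq]
      exact hbound q hq
    linarith
end
end

section
/- The road speed satisfies the two-sided bound 2√D/(2+μ) ≤ inf_{q>0} H_r(q)/q ≤ D/√(D−1). -/
open Real Filter Set

noncomputable section

namespace IsCriticalSlope

variable {D μ ν κ : ℝ} {pq : ℝ → ℝ}

theorem Hr_eq_of_le_one (h : IsCriticalSlope D μ ν κ pq) {q : ℝ} (hq : (D - 1) * q ^ 2 ≤ 1) :
    Hr pq q = q ^ 2 + 1 := by
  simp [Hr, (h q).1 hq]

theorem mul_sq_sub_le_Hr (h : IsCriticalSlope D μ ν κ pq) (hμ : 0 ≤ μ) (hκν : 0 ≤ κ * ν)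
    (q : ℝ) : D * q ^ 2 - μ ≤ Hr pq q := by
  rcases le_or_gt ((D - 1) * q ^ 2) 1 with hq | hq
  · rw [h.Hr_eq_of_le_one hq]
    linarith
  · obtain ⟨hp, hslope⟩ := (h q).2 hq
    have hfrac : μ * pq q / (κ * ν + pq q) ≤ μ := by
      rw [div_le_iff₀ (by positivity)]
      nlinarith
    unfold Hr
    linarith

theorem Hr_div_inv_sqrt (h : IsCriticalSlope D μ ν κ pq) (hD : 1 < D) :
    Hr pq (√(D - 1))⁻¹ / (√(D - 1))⁻¹ = D / √(D - 1) := by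
  have hs : 0 < √(D - 1) := Real.sqrt_pos.mpr (by linarith)
  have hs2 : √(D - 1) ^ 2 = D - 1 := Real.sq_sqrt (by linarith)
  rw [h.Hr_eq_of_le_one (by rw [inv_pow, hs2, mul_inv_cancel₀ (by linarith)])]
  field_simp
  linarith

end IsCriticalSlope

theorem le_one_add_mul_sq_of_le {D μ q t : ℝ} (hD : 0 ≤ D) (hμ : 0 ≤ μ) (hq : 0 < q)
    (h₁ : q ^ 2 + 1 ≤ t * q) (h₂ : D * q ^ 2 - μ ≤ t * q) : D ≤ (1 + μ) * t ^ 2 := by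
  have htq : 1 ≤ t * q := by nlinarith [sq_nonneg q]
  have ht : 0 ≤ t := nonneg_of_mul_nonneg_left (by linarith) hq
  have hDq : D * q ≤ (1 + μ) * t := by
    have : D * q ^ 2 ≤ (1 + μ) * t * q := by nlinarith
    nlinarith
  calc D ≤ D * (t * q) := le_mul_of_one_le_right hD htq
    _ = t * (D * q) := by ring
    _ ≤ t * ((1 + μ) * t) := mul_le_mul_of_nonneg_left hDq ht
    _ = (1 + μ) * t ^ 2 := by ring

theorem two_mul_sqrt_div_le_of_le_mul_sq {D μ t : ℝ} (hμ : 0 ≤ μ) (ht : 0 ≤ t)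
    (h : D ≤ (1 + μ) * t ^ 2) : 2 * √D / (2 + μ) ≤ t := by
  have hsqrt : √D ≤ (2 + μ) * t / 2 :=
    Real.sqrt_le_iff.mpr ⟨by positivity, by nlinarith [sq_nonneg (μ * t)]⟩
  rw [div_le_iff₀ (by linarith)]
  linarith

/-- Two-sided bound on the road speed:
`2√D/(2+μ) ≤ inf_{q>0} H_r(q)/q ≤ D/√(D−1)`. -/
theorem roadSpeed_bounds
    (D μ ν κ : ℝ) (hD : 1 < D) (hμ : 0 < μ) (hν : 0 < ν) (hκ : 0 < κ)
    (pq : ℝ → ℝ) (hpq : IsCriticalSlope D μ ν κ pq) :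
    2 * Real.sqrt D / (2 + μ) ≤ roadSpeed pq ∧
      roadSpeed pq ≤ D / Real.sqrt (D - 1) := by
  have hlower : ∀ x ∈ (fun q => Hr pq q / q) '' Ioi 0, 2 * √D / (2 + μ) ≤ x := by
    rintro _ ⟨q, hq, rfl⟩
    have hq : 0 < q := hq
    have ht : 0 ≤ Hr pq q / q := div_nonneg (by unfold Hr; positivity) hq.le
    refine two_mul_sqrt_div_le_of_le_mul_sq hμ.le ht
      (le_one_add_mul_sq_of_le (q := q) (by linarith) hμ.le hq ?_ ?_)
    · rw [div_mul_cancel₀ _ hq.ne']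
      exact sq_add_one_le_Hr pq q
    · rw [div_mul_cancel₀ _ hq.ne']
      exact hpq.mul_sq_sub_le_Hr hμ.le (by positivity) q
  have hmem : D / √(D - 1) ∈ (fun q => Hr pq q / q) '' Ioi 0 :=
    ⟨(√(D - 1))⁻¹, inv_pos.mpr (Real.sqrt_pos.mpr (by linarith)), hpq.Hr_div_inv_sqrt hD⟩
  exact ⟨le_csInf ⟨_, hmem⟩ hlower, csInf_le ⟨_, hlower⟩ hmem⟩
end
end

section
/- Let c_* be the unique positive real number with L_r(c_*) = 0. Then for every τ ∈ [0,1], every c ∈ ℝ with |c| ≤ c_*, and every (v₁, v₂) with v₂ ≥ 0 and v₁² + v₂² ≤ 4, one has J(c·τ + v₁·(1−τ), v₂·(1−τ)) ≤ 0. That is, the endpoint of any trajectory that moves at speed at most c_* on the road for time τ and at speed at most 2 in the field for the remaining time 1−τ lies in the Wulff shape {J ≤ 0}. -/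
open Real Filter Set

noncomputable section

lemma bddAbove_Lr (pq : ℝ → ℝ) (v : ℝ) :
    BddAbove (Set.range fun q => v * q - Hr pq q) := by
  refine ⟨v ^ 2 / 4 - 1, ?_⟩
  rintro _ ⟨q, rfl⟩
  have h1 := sq_nonneg (v / 2 - q)
  have h2 := sq_nonneg (pq q)
  simp only [Hr]
  nlinarith

lemma Lr_le_zero (pq : ℝ → ℝ) (cs : ℝ) (hcs : 0 < cs) (hLr : Lr pq cs = 0)
    (v : ℝ) (hv0 : 0 ≤ v) (hv : v ≤ cs) : Lr pq v ≤ 0 := by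
  apply ciSup_le
  intro q
  rcases le_or_gt 0 q with hq | hq
  · have h1 : cs * q - Hr pq q ≤ Lr pq cs := le_ciSup (bddAbove_Lr pq cs) q
    rw [hLr] at h1
    have h2 : v * q ≤ cs * q := mul_le_mul_of_nonneg_right hv hq
    linarith
  · have h2 : v * q ≤ 0 := mul_nonpos_of_nonneg_of_nonpos hv0 hq.le
    have h3 := sq_nonneg q
    have h4 := sq_nonneg (pq q)
    simp only [Hr]
    nlinarith

lemma Lr_ge_neg_one (pq : ℝ → ℝ) (h0 : pq 0 = 0) (v : ℝ) : -1 ≤ Lr pq v := by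
  have h1 : v * 0 - Hr pq 0 ≤ Lr pq v := le_ciSup (bddAbove_Lr pq v) 0
  simp [Hr, h0] at h1
  linarith

lemma Lf_ge_neg_one (a b : ℝ) : -1 ≤ Lf a b := by
  have := sq_nonneg a
  have := sq_nonneg b
  simp only [Lf]
  linarith

/-- The endpoint of any trajectory moving at speed at most `c_*` on the road
for time `τ` and at speed at most `2` in the field for time `1 − τ` lies in
the Wulff shape `{J ≤ 0}`. -/
theorem wulff_contains_broken_paths
    (D μ ν κ : ℝ) (hD : 1 < D) (hμ : 0 < μ) (hν : 0 < ν) (hκ : 0 < κ)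
    (pq : ℝ → ℝ) (hpq : IsCriticalSlope D μ ν κ pq)
    (cs : ℝ) (hcs : 0 < cs) (hLr : Lr pq cs = 0)
    (τ c v₁ v₂ : ℝ) (hτ0 : 0 ≤ τ) (hτ1 : τ ≤ 1) (hc : |c| ≤ cs)
    (hv2 : 0 ≤ v₂) (hv : v₁ ^ 2 + v₂ ^ 2 ≤ 4) :
    J pq (c * τ + v₁ * (1 - τ)) (v₂ * (1 - τ)) ≤ 0 := by
  have hpq0 : pq 0 = 0 := (hpq 0).1 (by norm_num)
  set x : ℝ := c * τ + v₁ * (1 - τ) with hxdef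
  set y : ℝ := v₂ * (1 - τ) with hydef
  -- the candidate set is bounded below by -1
  have hbdd : BddBelow (Jset pq |x| y) := by
    refine ⟨-1, ?_⟩
    intro e he
    rcases he with (he | he) | he
    · rw [Set.mem_singleton_iff] at he
      rw [he]; exact Lf_ge_neg_one _ _
    · obtain ⟨τ', z', ht0, ht1, _, _, rfl⟩ := he
      have hLf := Lf_ge_neg_one ((|x| - z') / (1 - τ')) (y / (1 - τ'))
      have hLrb := Lr_ge_neg_one pq hpq0 (z' / τ')
      have ha : (1 - τ') * (-1) ≤ (1 - τ') * Lf ((|x| - z') / (1 - τ')) (y / (1 - τ')) :=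
        mul_le_mul_of_nonneg_left hLf (by linarith)
      have hb : τ' * (-1) ≤ τ' * Lr pq (z' / τ') :=
        mul_le_mul_of_nonneg_left hLrb ht0.le
      linarith
    · by_cases hy0 : y = 0
      · simp [hy0] at he
        rw [he]; exact Lr_ge_neg_one pq hpq0 _
      · simp [hy0] at he
  -- exhibit an element of the candidate set that is ≤ 0
  have key : ∃ e ∈ Jset pq |x| y, e ≤ 0 := by
    rcases eq_or_lt_of_le hτ1 with h1 | h1
    · -- τ = 1 : pure road
      have hy0 : y = 0 := by rw [hydef, ← h1]; ring
      have hxc : x = c := by rw [hxdef, h1]; ring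
      refine ⟨Lr pq |x|, ?_, ?_⟩
      · right; simp [hy0]
      · exact Lr_le_zero pq cs hcs hLr _ (abs_nonneg x) (by rw [hxc]; exact hc)
    · rcases eq_or_lt_of_le hτ0 with h0 | h0
      · -- τ = 0 : pure field
        have hxv : x = v₁ := by rw [hxdef, ← h0]; ring
        have hyv : y = v₂ := by rw [hydef, ← h0]; ring
        refine ⟨Lf |x| y, ?_, ?_⟩
        · left; left; rfl
        · simp only [Lf, sq_abs, hxv, hyv]; linarith
      · -- 0 < τ < 1 : broken path
        have hτ' : 0 < 1 - τ := by linarith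
        set z : ℝ := max 0 (|x| - |v₁| * (1 - τ)) with hzdef
        have hz0 : 0 ≤ z := le_max_left _ _
        have habs : |x| ≤ |c| * τ + |v₁| * (1 - τ) := by
          calc |x| ≤ |c * τ| + |v₁ * (1 - τ)| := abs_add_le _ _
          _ = |c| * τ + |v₁| * (1 - τ) := by
              rw [abs_mul, abs_mul, abs_of_nonneg hτ0, abs_of_nonneg hτ'.le]
        have hzcs : z ≤ cs * τ := by
          apply max_le (by positivity)
          have : |c| * τ ≤ cs * τ := mul_le_mul_of_nonneg_right hc hτ0
          linarith
        have hzx : z ≤ |x| := by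
          apply max_le (abs_nonneg x)
          have : 0 ≤ |v₁| * (1 - τ) := by positivity
          linarith
        have hw1 : |x| - z ≤ |v₁| * (1 - τ) := by
          have := le_max_right 0 (|x| - |v₁| * (1 - τ))
          linarith
        refine ⟨(1 - τ) * Lf ((|x| - z) / (1 - τ)) (y / (1 - τ)) + τ * Lr pq (z / τ),
          ?_, ?_⟩
        · left; right; exact ⟨τ, z, h0, h1, hz0, hzx, rfl⟩
        · have hyv : y / (1 - τ) = v₂ := by
            rw [hydef, mul_div_assoc, div_self hτ'.ne', mul_one]
          have hw0 : 0 ≤ (|x| - z) / (1 - τ) := div_nonneg (by linarith) hτ'.le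
          have hwle : (|x| - z) / (1 - τ) ≤ |v₁| := by
            rw [div_le_iff₀ hτ']; linarith
          have hLf : Lf ((|x| - z) / (1 - τ)) (y / (1 - τ)) ≤ 0 := by
            rw [hyv]
            have hsq : ((|x| - z) / (1 - τ)) ^ 2 ≤ v₁ ^ 2 := by
              have h := sq_abs v₁
              nlinarith
            simp only [Lf]
            linarith
          have hLrz : Lr pq (z / τ) ≤ 0 := by
            apply Lr_le_zero pq cs hcs hLr _ (div_nonneg hz0 h0.le)
            rw [div_le_iff₀ h0]; linarith
          have ha : (1 - τ) * Lf ((|x| - z) / (1 - τ)) (y / (1 - τ)) ≤ 0 :=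
            mul_nonpos_of_nonneg_of_nonpos hτ'.le hLf
          have hb : τ * Lr pq (z / τ) ≤ 0 :=
            mul_nonpos_of_nonneg_of_nonpos h0.le hLrz
          linarith
  obtain ⟨e, he, he0⟩ := key
  calc J pq x y = sInf (Jset pq |x| y) := rfl
  _ ≤ e := csInf_le hbdd he
  _ ≤ 0 := he0
end
end

section
/- For θ > 0 define ζ_θ = 0 if θ ≤ 1, and otherwise let ζ_θ be the unique ζ > 0 satisfying θ² = ζ² + 1 + μζ/(κν + ζ). Writing c_*(D) = inf_{q>0} H_r^{(D)}(q)/q for the road speed with diffusivity D, one has lim_{D→∞} c_*(D)/√D = inf_{θ>0} (1 + ζ_θ²)/θ, and this limit is strictly positive. -/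
/-! With `s = √(D - 1)`, the substitution `θ = s q` turns the equation defining `p_q` into the one
defining `ζ_θ`, so `H_r(q)/q = q + s (1 + ζ_θ²)/θ`. Writing `L = inf_θ (1 + ζ_θ²)/θ`, this gives
`s L ≤ c_*(D) ≤ s ((1 + ζ_θ²)/θ + θ/s²)` for every `θ > 0`; since `s/√D → 1` the squeeze yields the
limit. Positivity: `θ² ≤ ζ_θ² + 1 + μ` forces `(1 + ζ_θ²)/θ ≥ 2/(μ + 2)`. -/

open Real Filter Set

noncomputable section

/-- `IsCriticalSlope D μ ν κ pq` unfolds to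
`∀ q, IsCriticalSlopeAt μ (κ * ν) ((D - 1) * q ^ 2) (pq q)`, and the hypothesis on `ζ` says
`IsCriticalSlopeAt μ (κ * ν) (θ ^ 2) (ζ θ)` for `θ > 0`. -/
def IsCriticalSlopeAt (μ c a p : ℝ) : Prop :=
  (a ≤ 1 → p = 0) ∧ (1 < a → 0 < p ∧ a = p ^ 2 + 1 + μ * p / (c + p))

def limitRatio (ζ : ℝ → ℝ) (θ : ℝ) : ℝ := (1 + ζ θ ^ 2) / θ

section CriticalSlope

variable {μ c : ℝ}

theorem strictMonoOn_sq_add_one_add_div (hμ : 0 ≤ μ) (hc : 0 ≤ c) :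
    StrictMonoOn (fun p : ℝ => p ^ 2 + 1 + μ * p / (c + p)) (Ioi 0) := by
  intro a ha b _ hab
  have ha : 0 < a := ha
  have hfrac : μ * a / (c + a) ≤ μ * b / (c + b) := by
    rw [div_le_div_iff₀ (by linarith) (by linarith)]
    nlinarith [mul_nonneg (mul_nonneg hμ hc) (sub_nonneg.2 hab.le)]
  dsimp only
  nlinarith

theorem IsCriticalSlopeAt.unique (hμ : 0 ≤ μ) (hc : 0 ≤ c) {a p₁ p₂ : ℝ}
    (h₁ : IsCriticalSlopeAt μ c a p₁) (h₂ : IsCriticalSlopeAt μ c a p₂) : p₁ = p₂ := by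
  rcases le_or_gt a 1 with ha | ha
  · rw [h₁.1 ha, h₂.1 ha]
  · obtain ⟨hp₁, ha₁⟩ := h₁.2 ha
    obtain ⟨hp₂, ha₂⟩ := h₂.2 ha
    exact (strictMonoOn_sq_add_one_add_div hμ hc).injOn hp₁ hp₂ (ha₁.symm.trans ha₂)

theorem IsCriticalSlopeAt.le_sq_add_one_add (hμ : 0 ≤ μ) (hc : 0 ≤ c) {a p : ℝ}
    (h : IsCriticalSlopeAt μ c a p) : a ≤ p ^ 2 + 1 + μ := by
  rcases le_or_gt a 1 with ha | ha
  · rw [h.1 ha]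
    linarith
  · obtain ⟨hp, rfl⟩ := h.2 ha
    have : μ * p / (c + p) ≤ μ := by
      rw [div_le_iff₀ (by linarith)]
      nlinarith
    linarith

theorem isCriticalSlopeAt_sq {θ z : ℝ} (hθ : 0 < θ)
    (h : (θ ≤ 1 → z = 0) ∧ (1 < θ → 0 < z ∧ θ ^ 2 = z ^ 2 + 1 + μ * z / (c + z))) :
    IsCriticalSlopeAt μ c (θ ^ 2) z :=
  ⟨fun hθ1 => h.1 (by nlinarith), fun hθ1 => h.2 (by nlinarith)⟩

theorem two_div_le_limitRatio (hμ : 0 ≤ μ) (hc : 0 ≤ c) {ζ : ℝ → ℝ} {θ : ℝ} (hθ : 0 < θ)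
    (hζ : IsCriticalSlopeAt μ c (θ ^ 2) (ζ θ)) : 2 / (μ + 2) ≤ limitRatio ζ θ := by
  have hθζ := hζ.le_sq_add_one_add hμ hc
  rw [limitRatio, div_le_div_iff₀ (by linarith) hθ]
  nlinarith [sq_nonneg (θ - 1), mul_nonneg hμ (sq_nonneg (ζ θ))]

theorem nonempty_limitRatio_image (ζ : ℝ → ℝ) : (limitRatio ζ '' Ioi 0).Nonempty :=
  ⟨_, mem_image_of_mem _ (mem_Ioi.2 one_pos)⟩

theorem bddBelow_limitRatio_image (hμ : 0 ≤ μ) (hc : 0 ≤ c) {ζ : ℝ → ℝ}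
    (hζ : ∀ θ, 0 < θ → IsCriticalSlopeAt μ c (θ ^ 2) (ζ θ)) : BddBelow (limitRatio ζ '' Ioi 0) :=
  ⟨0, fun _ ⟨θ, hθ, h⟩ =>
    h ▸ (div_pos two_pos (by linarith)).le.trans (two_div_le_limitRatio hμ hc hθ (hζ θ hθ))⟩

theorem sInf_limitRatio_pos (hμ : 0 ≤ μ) (hc : 0 ≤ c) {ζ : ℝ → ℝ}
    (hζ : ∀ θ, 0 < θ → IsCriticalSlopeAt μ c (θ ^ 2) (ζ θ)) : 0 < sInf (limitRatio ζ '' Ioi 0) :=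
  (div_pos two_pos (by linarith : 0 < μ + 2)).trans_le <|
    le_csInf (nonempty_limitRatio_image ζ) fun _ ⟨θ, hθ, h⟩ =>
      h ▸ two_div_le_limitRatio hμ hc hθ (hζ θ hθ)

end CriticalSlope

section RoadSpeed

variable {D μ ν κ : ℝ} {p ζ : ℝ → ℝ}

theorem IsCriticalSlope.apply_eq (hp : IsCriticalSlope D μ ν κ p) (hD : 1 ≤ D) (hμ : 0 ≤ μ)
    (hc : 0 ≤ κ * ν) {q z : ℝ} (hz : IsCriticalSlopeAt μ (κ * ν) ((√(D - 1) * q) ^ 2) z) :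
    p q = z := by
  rw [mul_pow, sq_sqrt (by linarith)] at hz
  exact IsCriticalSlopeAt.unique hμ hc (hp q) hz

variable (hp : IsCriticalSlope D μ ν κ p) (hD : 1 < D) (hμ : 0 ≤ μ) (hc : 0 ≤ κ * ν)
  (hζ : ∀ θ, 0 < θ → IsCriticalSlopeAt μ (κ * ν) (θ ^ 2) (ζ θ))
include hp hD hμ hc hζ

theorem Hr_div_eq {q : ℝ} (hq : 0 < q) :
    Hr p q / q = q + √(D - 1) * limitRatio ζ (√(D - 1) * q) := by
  have hs : 0 < √(D - 1) := sqrt_pos.2 (by linarith)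
  rw [Hr, limitRatio, hp.apply_eq hD.le hμ hc (hζ _ (mul_pos hs hq))]
  field_simp
  ring

theorem sqrt_mul_sInf_le_roadSpeed :
    √(D - 1) * sInf (limitRatio ζ '' Ioi 0) ≤ roadSpeed p := by
  have hs : 0 < √(D - 1) := sqrt_pos.2 (by linarith)
  refine le_csInf ⟨_, mem_image_of_mem _ (mem_Ioi.2 one_pos)⟩ ?_
  rintro _ ⟨q, hq, rfl⟩
  have hL : sInf (limitRatio ζ '' Ioi 0) ≤ limitRatio ζ (√(D - 1) * q) :=
    csInf_le (bddBelow_limitRatio_image hμ hc hζ) (mem_image_of_mem _ (mul_pos hs hq))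
  rw [mem_Ioi] at hq
  dsimp only
  rw [Hr_div_eq hp hD hμ hc hζ hq]
  nlinarith

theorem roadSpeed_le {θ : ℝ} (hθ : 0 < θ) :
    roadSpeed p ≤ √(D - 1) * (limitRatio ζ θ + θ / (D - 1)) := by
  have hs : 0 < √(D - 1) := sqrt_pos.2 (by linarith)
  have hbdd : BddBelow ((fun q => Hr p q / q) '' Ioi 0) := ⟨0, by
    rintro _ ⟨q, hq, rfl⟩
    exact div_nonneg (by unfold Hr; positivity) (mem_Ioi.1 hq).le⟩
  have hθq : θ / √(D - 1) ∈ Ioi 0 := div_pos hθ hs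
  calc roadSpeed p ≤ Hr p (θ / √(D - 1)) / (θ / √(D - 1)) :=
        csInf_le hbdd (mem_image_of_mem _ hθq)
    _ = √(D - 1) * (limitRatio ζ θ + θ / (D - 1)) := by
      rw [Hr_div_eq hp hD hμ hc hζ hθq, mul_div_cancel₀ _ hs.ne']
      have hs2 : √(D - 1) ^ 2 = D - 1 := sq_sqrt (by linarith)
      field_simp [(by linarith : D - 1 ≠ 0)]
      rw [hs2]
      ring

end RoadSpeed

theorem tendsto_sqrt_sub_one_div_sqrt :
    Tendsto (fun D : ℝ => √(D - 1) / √D) atTop (nhds 1) := by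
  have h : Tendsto (fun D : ℝ => √(1 - D⁻¹)) atTop (nhds (√(1 - 0))) :=
    (continuous_sqrt.tendsto _).comp (tendsto_const_nhds.sub tendsto_inv_atTop_zero)
  rw [sub_zero, sqrt_one] at h
  refine h.congr' ?_
  filter_upwards [eventually_gt_atTop 0] with D hD
  rw [← sqrt_div' _ hD.le, sub_div, div_self hD.ne', one_div]

/-- Asymptotics of the road speed as `D → ∞`:
`c_*(D)/√D → inf_{θ>0} (1 + ζ_θ²)/θ > 0`. -/
theorem roadSpeed_asymptotics
    (μ ν κ : ℝ) (hμ : 0 < μ) (hν : 0 < ν) (hκ : 0 < κ)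
    (pq : ℝ → ℝ → ℝ) (hpq : ∀ D : ℝ, 1 < D → IsCriticalSlope D μ ν κ (pq D))
    (ζ : ℝ → ℝ)
    (hζ : ∀ θ : ℝ, 0 < θ →
      (θ ≤ 1 → ζ θ = 0) ∧
      (1 < θ → 0 < ζ θ ∧ θ ^ 2 = ζ θ ^ 2 + 1 + μ * ζ θ / (κ * ν + ζ θ))) :
    Tendsto (fun D : ℝ => roadSpeed (pq D) / Real.sqrt D) atTop
        (nhds (sInf ((fun θ : ℝ => (1 + ζ θ ^ 2) / θ) '' Set.Ioi 0))) ∧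
      0 < sInf ((fun θ : ℝ => (1 + ζ θ ^ 2) / θ) '' Set.Ioi 0) := by
  have hc : 0 ≤ κ * ν := (mul_pos hκ hν).le
  have hζ' θ (hθ : 0 < θ) : IsCriticalSlopeAt μ (κ * ν) (θ ^ 2) (ζ θ) :=
    isCriticalSlopeAt_sq hθ (hζ θ hθ)
  change Tendsto _ atTop (nhds (sInf (limitRatio ζ '' Ioi 0))) ∧ 0 < sInf (limitRatio ζ '' Ioi 0)
  have hsqrt := tendsto_sqrt_sub_one_div_sqrt
  refine ⟨tendsto_order.2 ⟨fun a ha => ?_, fun b hb => ?_⟩, sInf_limitRatio_pos hμ.le hc hζ'⟩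
  · have hlow := hsqrt.mul_const (sInf (limitRatio ζ '' Ioi 0))
    rw [one_mul] at hlow
    filter_upwards [eventually_gt_atTop 1, hlow.eventually_const_lt ha] with D hD haD
    refine haD.trans_le ?_
    rw [div_mul_eq_mul_div]
    gcongr
    exact sqrt_mul_sInf_le_roadSpeed (hpq D hD) hD hμ.le hc hζ'
  · obtain ⟨_, ⟨θ, hθ, rfl⟩, hθb⟩ := exists_lt_of_csInf_lt (nonempty_limitRatio_image ζ) hb
    have hup : Tendsto (fun D : ℝ => √(D - 1) / √D * (limitRatio ζ θ + θ / (D - 1))) atTop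
        (nhds (limitRatio ζ θ)) := by
      simpa using hsqrt.mul (tendsto_const_nhds.add (tendsto_const_nhds.div_atTop
        (tendsto_atTop_atTop.2 fun b => ⟨b + 1, fun D hD => by linarith⟩)))
    filter_upwards [eventually_gt_atTop 1, hup.eventually_lt_const hθb] with D hD hbD
    refine lt_of_le_of_lt ?_ hbD
    rw [div_mul_eq_mul_div]
    gcongr
    exact roadSpeed_le (hpq D hD) hD hμ.le hc hζ' hθ
end
end
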